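/- arXiv:2306.12997 — 2 statements merged into one kernel-verified Lean document; each statement's English description precedes it below -/
import Mathlib

section
/- There exist universal constants c₀, c₁, c₂ > 0 such that every log-concave real random variable X with Var(X) = 1 satisfies: (1) Var(X²)^{1/2} ≥ c₀; (2) Var((X − EX)²)^{1/2} ≤ c₁; (3) ‖X − EX‖_{ψ₁} ≤ c₂. -/
open MeasureTheory Real
open scoped ENNReal NNReal RealInnerProductSpace

noncomputable section

abbrev Euc (n : ℕ) := EuclideanSpace ℝ (Fin n)

/-- Entropy of a nonnegative function with respect to a measure. -/
def ent {Ω : Type*} [MeasurableSpace Ω] (μ : Measure Ω) (g : Ω → ℝ) : ℝ :=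
  (∫ x, g x * Real.log (g x) ∂μ) - (∫ x, g x ∂μ) * Real.log (∫ x, g x ∂μ)

/-- μ satisfies the log-Sobolev inequality with constant ρ. -/
def SatisfiesLSI {n : ℕ} (μ : Measure (Euc n)) (ρ : ℝ) : Prop :=
  ∀ f : Euc n → ℝ, LocallyLipschitz f →
    Integrable (fun x => f x ^ 2) μ →
    Integrable (fun x => f x ^ 2 * Real.log (f x ^ 2)) μ →
    Integrable (fun x => ‖fderiv ℝ f x‖ ^ 2) μ →
    ent μ (fun x => f x ^ 2) ≤ 2 * ρ ^ 2 * ∫ x, ‖fderiv ℝ f x‖ ^ 2 ∂μ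

/-- A measure is log-concave if it has a log-concave density wrt the Lebesgue measure. -/
def IsLogConcave {V : Type*} [MeasureSpace V] [AddCommGroup V] [Module ℝ V] (μ : Measure V) : Prop :=
  ∃ d : V → ℝ, Measurable d ∧ (∀ x, 0 ≤ d x) ∧
    (∀ x y : V, ∀ a b : ℝ, 0 ≤ a → 0 ≤ b → a + b = 1 →
      d x ^ a * d y ^ b ≤ d (a • x + b • y)) ∧
    μ = volume.withDensity fun x => ENNReal.ofReal (d x)

/-- The ψ₂ (sub-gaussian) norm of `g` under `μ` is at most `t`. -/
def HasPsi2NormLE {Ω : Type*} [MeasurableSpace Ω] (μ : Measure Ω) (g : Ω → ℝ) (t : ℝ) : Prop :=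
  0 < t ∧ ∫ x, Real.exp (g x ^ 2 / t ^ 2) ∂μ ≤ 2

/-- The ψ₁ (sub-exponential) norm of `g` under `μ` is at most `K`. -/
def HasPsi1NormLE {Ω : Type*} [MeasurableSpace Ω] (μ : Measure Ω) (g : Ω → ℝ) (K : ℝ) : Prop :=
  0 < K ∧ ∫ x, Real.exp (|g x| / K) ∂μ ≤ 2

/-- The ψ₂ norm. -/
def psi2 {Ω : Type*} [MeasurableSpace Ω] (μ : Measure Ω) (g : Ω → ℝ) : ℝ :=
  sInf {t : ℝ | HasPsi2NormLE μ g t}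

/-- Barycenter. -/
def bary {n : ℕ} (μ : Measure (Euc n)) : Euc n := ∫ x, x ∂μ

/-- Exponential tilt. -/
def tilt {n : ℕ} (μ : Measure (Euc n)) (h : Euc n) : Measure (Euc n) :=
  (ENNReal.ofReal (∫ x, Real.exp ⟪h, x⟫ ∂μ))⁻¹ •
    μ.withDensity fun x => ENNReal.ofReal (Real.exp ⟪h, x⟫)

/-- Gaussian-tilted measure μ_{t,h}. -/
def gtilt {n : ℕ} (μ : Measure (Euc n)) (t : ℝ) (h : Euc n) : Measure (Euc n) :=
  (ENNReal.ofReal (∫ x, Real.exp (-t * ‖x‖ ^ 2 + ⟪h, x⟫) ∂μ))⁻¹ •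
    μ.withDensity fun x => ENNReal.ofReal (Real.exp (-t * ‖x‖ ^ 2 + ⟪h, x⟫))

/-- All exponential tilts of μ are well defined. -/
def TiltsWellDefined {n : ℕ} (μ : Measure (Euc n)) : Prop :=
  ∀ h : Euc n, Integrable (fun x => Real.exp ⟪h, x⟫) μ

/-- μ is β-tilt-stable: Cov(τ_h μ) ≼ β² Iₙ for all h. -/
def TiltStable {n : ℕ} (μ : Measure (Euc n)) (β : ℝ) : Prop :=
  ∀ h θ : Euc n, ‖θ‖ = 1 →
    ∫ x, ⟪x - bary (tilt μ h), θ⟫ ^ 2 ∂(tilt μ h) ≤ β ^ 2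

/-- μ is β-strongly tilt-stable. -/
def StronglyTiltStable {n : ℕ} (μ : Measure (Euc n)) (β : ℝ) : Prop :=
  ∀ t : ℝ, 0 < t → ∀ h θ : Euc n, ‖θ‖ = 1 →
    ∫ x, ⟪x - bary (gtilt μ t h), θ⟫ ^ 2 ∂(gtilt μ t h) ≤ β ^ 2

/-- Log-Sobolev constant. -/
def logSobolevConstant {n : ℕ} (μ : Measure (Euc n)) : ℝ :=
  sInf {ρ : ℝ | 0 < ρ ∧ SatisfiesLSI μ ρ}


/-!
Since `log d` is concave for the density `d` of `X`, its slopes decrease: once `d` has dropped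
by a factor `e^{-λh}` over a distance `h` away from some point, it keeps decaying at rate `λ`
from there on. Chebyshev's inequality provides a point within 2 of the mean where `d ≥ 1/8`,
and points at distance about 20 on either side where `d < 1/200`; the resulting exponential
tails give `E exp(|X - EX|/100) ≤ 2`, which is (3) and, through the fourth moment, (2).
Likewise, if `d z > 10⁶`, there are points within `2/1000` of `z` on either side where
`d < 2000`, and the tails they force make `E (X - z)² < 1 = Var X`. So `d ≤ 10⁶`, and then
`X²` is within `δ²` of any constant only on an event of probability `O(10⁶ δ)`, which gives
(1).
-/

open Set Filter ProbabilityTheory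

section LogConcave

variable {d : ℝ → ℝ}

theorem concaveOn_log_of_rpow_le
    (hlc : ∀ x y : ℝ, ∀ a b : ℝ, 0 ≤ a → 0 ≤ b → a + b = 1 →
      d x ^ a * d y ^ b ≤ d (a • x + b • y)) :
    ConcaveOn ℝ {x | 0 < d x} fun x => log (d x) := by
  have hpos {x y a b : ℝ} (hx : 0 < d x) (hy : 0 < d y) (ha : 0 ≤ a) (hb : 0 ≤ b)
      (hab : a + b = 1) : 0 < d x ^ a * d y ^ b :=
    mul_pos (rpow_pos_of_pos hx a) (rpow_pos_of_pos hy b)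
  refine ⟨fun x hx y hy a b ha hb hab =>
    (hpos hx hy ha hb hab).trans_le (hlc x y a b ha hb hab), ?_⟩
  intro x hx y hy a b ha hb hab
  have h := log_le_log (hpos hx hy ha hb hab) (hlc x y a b ha hb hab)
  rwa [log_mul (rpow_pos_of_pos hx a).ne' (rpow_pos_of_pos hy b).ne', log_rpow hx,
    log_rpow hy] at h

theorem le_mul_exp_of_concaveOn_log_right (hd0 : ∀ x, 0 ≤ d x)
    (hconc : ConcaveOn ℝ {x | 0 < d x} fun x => log (d x)) {z w x l : ℝ}
    (hz : 0 < d z) (hzw : z < w) (hwx : w ≤ x) (hw : d w ≤ exp (-(l * (w - z))) * d z) :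
    d x ≤ d w * exp (-(l * (x - w))) := by
  rcases (hd0 x).eq_or_lt with hx | hx
  · rw [← hx]; exact mul_nonneg (hd0 w) (exp_nonneg _)
  rcases hwx.eq_or_lt with rfl | hwx
  · simp
  have hwpos : 0 < d w := hconc.1.ordConnected.out hz hx ⟨hzw.le, hwx.le⟩
  have hslope := hconc.slope_anti_adjacent hz hx hzw hwx
  have hrate : (log (d w) - log (d z)) / (w - z) ≤ -l := by
    have := log_le_log hwpos hw
    rw [log_mul (exp_pos _).ne' hz.ne', log_exp] at this
    rw [div_le_iff₀ (sub_pos.2 hzw)]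
    linarith
  have hlog : log (d x) - log (d w) ≤ -(l * (x - w)) := by
    rw [div_le_iff₀ (sub_pos.2 hwx)] at hslope
    nlinarith [mul_le_mul_of_nonneg_right hrate (sub_pos.2 hwx).le]
  calc d x = exp (log (d x)) := (exp_log hx).symm
    _ ≤ exp (log (d w) + -(l * (x - w))) := exp_le_exp.2 (by linarith)
    _ = d w * exp (-(l * (x - w))) := by rw [exp_add, exp_log hwpos]

theorem le_mul_exp_of_concaveOn_log_left (hd0 : ∀ x, 0 ≤ d x)
    (hconc : ConcaveOn ℝ {x | 0 < d x} fun x => log (d x)) {z w x l : ℝ}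
    (hz : 0 < d z) (hwz : w < z) (hxw : x ≤ w) (hw : d w ≤ exp (-(l * (z - w))) * d z) :
    d x ≤ d w * exp (-(l * (w - x))) := by
  have hrefl : ConcaveOn ℝ {x | 0 < d (-x)} fun x => log (d (-x)) :=
    hconc.comp_linearMap (-LinearMap.id)
  have := le_mul_exp_of_concaveOn_log_right (d := fun x => d (-x)) (fun x => hd0 _) hrefl
    (z := -z) (w := -w) (x := -x) (by simpa) (by linarith) (by linarith)
    (by simpa [add_comm, ← sub_eq_add_neg] using hw)
  simpa [add_comm, ← sub_eq_add_neg] using this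

end LogConcave

theorem integrableOn_exp_neg_mul_sub_Ioi {s : ℝ} (hs : 0 < s) (b : ℝ) :
    IntegrableOn (fun x => exp (-(s * (x - b)))) (Ioi b) := by
  refine IntegrableOn.congr_fun
    ((integrableOn_exp_mul_Ioi (neg_lt_zero.2 hs) b).const_mul (exp (s * b)))
    (fun x _ => ?_) measurableSet_Ioi
  rw [← exp_add]; ring_nf

theorem integral_exp_neg_mul_sub_Ioi {s : ℝ} (hs : 0 < s) (b : ℝ) :
    ∫ x in Ioi b, exp (-(s * (x - b))) = 1 / s := by
  have h (x : ℝ) : exp (-(s * (x - b))) = exp (s * b) * exp (-s * x) := by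
    rw [← exp_add]; ring_nf
  simp_rw [h]
  rw [integral_const_mul, integral_exp_mul_Ioi (neg_lt_zero.2 hs), neg_mul, exp_neg]
  field_simp

theorem integrableOn_exp_neg_mul_sub_Iio {s : ℝ} (hs : 0 < s) (a : ℝ) :
    IntegrableOn (fun x => exp (-(s * (a - x)))) (Iio a) := by
  refine IntegrableOn.congr_fun
    (((integrableOn_exp_mul_Iic hs a).mono_set Iio_subset_Iic_self).const_mul (exp (-(s * a))))
    (fun x _ => ?_) measurableSet_Iio
  rw [← exp_add]; ring_nf

theorem integral_exp_neg_mul_sub_Iio {s : ℝ} (hs : 0 < s) (a : ℝ) :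
    ∫ x in Iio a, exp (-(s * (a - x))) = 1 / s := by
  have h (x : ℝ) : exp (-(s * (a - x))) = exp (-(s * a)) * exp (s * x) := by
    rw [← exp_add]; ring_nf
  simp_rw [h]
  rw [← integral_Iic_eq_integral_Iio, integral_const_mul, integral_exp_mul_Iic hs, exp_neg]
  field_simp

theorem lintegral_le_Iio_add_Icc_add_Ioi {μ : Measure ℝ} (f : ℝ → ℝ≥0∞) (a b : ℝ) :
    ∫⁻ x, f x ∂μ ≤ (∫⁻ x in Iio a, f x ∂μ) + (∫⁻ x in Icc a b, f x ∂μ) +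
      ∫⁻ x in Ioi b, f x ∂μ := by
  have hcover : (univ : Set ℝ) ⊆ Iio a ∪ Icc a b ∪ Ioi b := by
    intro x _
    by_cases hxa : x < a
    · exact Or.inl (Or.inl hxa)
    by_cases hxb : x ≤ b
    · exact Or.inl (Or.inr ⟨not_lt.1 hxa, hxb⟩)
    · exact Or.inr (not_le.1 hxb)
  calc ∫⁻ x, f x ∂μ ≤ ∫⁻ x in Iio a ∪ Icc a b ∪ Ioi b, f x ∂μ := by
        rw [← setLIntegral_univ]; exact lintegral_mono_set hcover
    _ ≤ _ := (lintegral_union_le _ _ _).trans (add_le_add (lintegral_union_le _ _ _) le_rfl)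

theorem integrable_and_integral_le_of_lintegral_le {Ω : Type*} [MeasurableSpace Ω]
    {μ : Measure Ω} {f : Ω → ℝ} (hf : AEStronglyMeasurable f μ) (hf0 : 0 ≤ᵐ[μ] f)
    {c : ℝ} (hc : 0 ≤ c) (h : ∫⁻ x, ENNReal.ofReal (f x) ∂μ ≤ ENNReal.ofReal c) :
    Integrable f μ ∧ ∫ x, f x ∂μ ≤ c := by
  refine ⟨⟨hf, (hasFiniteIntegral_iff_ofReal hf0).2 (h.trans_lt ENNReal.ofReal_lt_top)⟩, ?_⟩
  rw [integral_eq_lintegral_of_nonneg_ae hf0 hf]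
  exact ENNReal.toReal_le_of_le_ofReal hc h

section Density

variable {d : ℝ → ℝ} {μ : Measure ℝ}

theorem measure_Icc_le_of_density_le
    (hμ : μ = volume.withDensity fun x => ENNReal.ofReal (d x)) {p q c : ℝ} (hc : 0 ≤ c)
    (hdc : ∀ x ∈ Icc p q, d x ≤ c) : μ (Icc p q) ≤ ENNReal.ofReal (c * (q - p)) := by
  rw [hμ, withDensity_apply _ measurableSet_Icc]
  calc ∫⁻ x in Icc p q, ENNReal.ofReal (d x)
      ≤ ∫⁻ _ in Icc p q, ENNReal.ofReal c :=
        setLIntegral_mono' measurableSet_Icc fun x hx => ENNReal.ofReal_le_ofReal (hdc x hx)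
    _ = ENNReal.ofReal (c * (q - p)) := by
        rw [setLIntegral_const, Real.volume_Icc, ← ENNReal.ofReal_mul hc]

theorem exists_density_lt_of_measure_Icc_lt
    (hμ : μ = volume.withDensity fun x => ENNReal.ofReal (d x)) {p q c : ℝ} (hpq : p ≤ q)
    (hlt : μ (Icc p q) < ENNReal.ofReal (c * (q - p))) : ∃ w ∈ Icc p q, d w < c := by
  by_contra! h
  have hc : 0 ≤ c := by
    have := ENNReal.ofReal_pos.1 (pos_of_gt hlt)
    nlinarith
  refine hlt.not_ge ?_
  rw [hμ, withDensity_apply _ measurableSet_Icc]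
  calc ENNReal.ofReal (c * (q - p)) = ∫⁻ _ in Icc p q, ENNReal.ofReal c := by
        rw [setLIntegral_const, Real.volume_Icc, ← ENNReal.ofReal_mul hc]
    _ ≤ ∫⁻ x in Icc p q, ENNReal.ofReal (d x) :=
        setLIntegral_mono' measurableSet_Icc fun x hx => ENNReal.ofReal_le_ofReal (h x hx)

theorem exists_density_lt_two_div [IsProbabilityMeasure μ]
    (hμ : μ = volume.withDensity fun x => ENNReal.ofReal (d x)) {h : ℝ} (hh : 0 < h) (p : ℝ) :
    ∃ w ∈ Icc p (p + h), d w < 2 / h := by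
  refine exists_density_lt_of_measure_Icc_lt hμ (by linarith) (prob_le_one.trans_lt ?_)
  rw [add_sub_cancel_left, div_mul_cancel₀ _ hh.ne', ← ENNReal.ofReal_one,
    ENNReal.ofReal_lt_ofReal_iff (by norm_num)]
  norm_num

theorem setLIntegral_le_of_density_mul_le (hd : Measurable d) (hd0 : ∀ x, 0 ≤ d x)
    (hμ : μ = volume.withDensity fun x => ENNReal.ofReal (d x)) {F G : ℝ → ℝ}
    (hF : Measurable F) {s : Set ℝ} (hs : MeasurableSet s) (hG : IntegrableOn G s)
    (hG0 : ∀ x ∈ s, 0 ≤ G x) (hFG : ∀ x ∈ s, d x * F x ≤ G x) :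
    ∫⁻ x in s, ENNReal.ofReal (F x) ∂μ ≤ ENNReal.ofReal (∫ x in s, G x) := by
  rw [hμ, setLIntegral_withDensity_eq_lintegral_mul₀ (by fun_prop) (by fun_prop) hs,
    ofReal_integral_eq_lintegral_ofReal hG ((ae_restrict_iff' hs).2 (.of_forall hG0))]
  refine setLIntegral_mono' hs fun x hx => ?_
  rw [Pi.mul_apply, ← ENNReal.ofReal_mul (hd0 x)]
  exact ENNReal.ofReal_le_ofReal (hFG x hx)

theorem integrable_and_integral_le_of_exp_tails [IsProbabilityMeasure μ] (hd : Measurable d)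
    (hd0 : ∀ x, 0 ≤ d x) (hμ : μ = volume.withDensity fun x => ENNReal.ofReal (d x))
    {F : ℝ → ℝ} (hF : Measurable F) (hF0 : ∀ x, 0 ≤ F x) {a b B C s : ℝ} (hab : a ≤ b)
    (hs : 0 < s) (hmid : ∀ x ∈ Icc a b, F x ≤ C)
    (hleft : ∀ x < a, d x * F x ≤ B * exp (-(s * (a - x))))
    (hright : ∀ x > b, d x * F x ≤ B * exp (-(s * (x - b)))) :
    Integrable F μ ∧ ∫ x, F x ∂μ ≤ C + 2 * B / s := by
  have hB : 0 ≤ B := by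
    have := (mul_nonneg (hd0 (a - 1)) (hF0 (a - 1))).trans (hleft (a - 1) (by linarith))
    exact nonneg_of_mul_nonneg_left this (exp_pos _)
  have hC : 0 ≤ C := (hF0 a).trans (hmid a ⟨le_rfl, hab⟩)
  have hleft' := setLIntegral_le_of_density_mul_le hd hd0 hμ hF measurableSet_Iio
    ((integrableOn_exp_neg_mul_sub_Iio hs a).const_mul B) (fun x _ => by positivity) hleft
  have hright' := setLIntegral_le_of_density_mul_le hd hd0 hμ hF measurableSet_Ioi
    ((integrableOn_exp_neg_mul_sub_Ioi hs b).const_mul B) (fun x _ => by positivity) hright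
  rw [integral_const_mul, integral_exp_neg_mul_sub_Iio hs] at hleft'
  rw [integral_const_mul, integral_exp_neg_mul_sub_Ioi hs] at hright'
  have hmid' : ∫⁻ x in Icc a b, ENNReal.ofReal (F x) ∂μ ≤ ENNReal.ofReal C :=
    calc ∫⁻ x in Icc a b, ENNReal.ofReal (F x) ∂μ
        ≤ ∫⁻ _ in Icc a b, ENNReal.ofReal C ∂μ :=
          setLIntegral_mono' measurableSet_Icc fun x hx => ENNReal.ofReal_le_ofReal (hmid x hx)
      _ ≤ ENNReal.ofReal C := by
          rw [setLIntegral_const]; exact mul_le_of_le_one_right' prob_le_one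
  refine integrable_and_integral_le_of_lintegral_le hF.aestronglyMeasurable (.of_forall hF0)
    (by positivity) ?_
  calc ∫⁻ x, ENNReal.ofReal (F x) ∂μ
      ≤ ENNReal.ofReal (B * (1 / s)) + ENNReal.ofReal C + ENNReal.ofReal (B * (1 / s)) :=
        (lintegral_le_Iio_add_Icc_add_Ioi _ a b).trans (by gcongr)
    _ = ENNReal.ofReal (C + 2 * B / s) := by
        rw [← ENNReal.ofReal_add (by positivity) hC, ← ENNReal.ofReal_add (by positivity)
          (by positivity)]
        ring_nf

end Density

theorem variance_le_integral_sub_sq {Ω : Type*} [MeasurableSpace Ω] {μ : Measure Ω}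
    [IsProbabilityMeasure μ] {X : Ω → ℝ} (hX : AEStronglyMeasurable X μ) (z : ℝ) :
    Var[X; μ] ≤ ∫ ω, (X ω - z) ^ 2 ∂μ := by
  rw [← variance_sub_const hX z]
  exact variance_le_expectation_sq (hX.sub aestronglyMeasurable_const)

section UnitVariance

variable {μ : Measure ℝ} [IsProbabilityMeasure μ]

theorem measure_le_abs_sub_mean_le (hvar : Var[id; μ] = 1) {r : ℝ} (hr : 0 < r) :
    μ {x | r ≤ |x - ∫ y, y ∂μ|} ≤ ENNReal.ofReal (1 / r ^ 2) := by
  have hX : MemLp id 2 μ :=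
    memLp_two_of_variance_ne_zero aestronglyMeasurable_id (by simp [hvar])
  simpa [hvar] using meas_ge_le_variance_div_sq hX hr

theorem ofReal_one_sub_le_measure_Icc_mean (hvar : Var[id; μ] = 1) {r : ℝ} (hr : 0 < r) :
    ENNReal.ofReal (1 - 1 / r ^ 2) ≤ μ (Icc ((∫ y, y ∂μ) - r) ((∫ y, y ∂μ) + r)) := by
  set m := ∫ y, y ∂μ
  have hsub : (Icc (m - r) (m + r))ᶜ ⊆ {x | r ≤ |x - m|} := by
    intro x hx
    simp only [mem_compl_iff, mem_Icc, not_and_or, not_le] at hx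
    rcases hx with h | h
    · rw [mem_ofPred_eq, abs_sub_comm, abs_of_pos (by linarith)]; linarith
    · rw [mem_ofPred_eq, abs_of_pos (by linarith)]; linarith
  have := (measure_mono hsub).trans (measure_le_abs_sub_mean_le hvar hr)
  rw [prob_compl_eq_one_sub measurableSet_Icc, tsub_le_iff_tsub_le] at this
  rwa [ENNReal.ofReal_sub _ (by positivity), ENNReal.ofReal_one]

end UnitVariance

theorem sq_le_two_div_sq_mul_exp {s v : ℝ} (hs : 0 < s) (hv : 0 ≤ v) :
    v ^ 2 ≤ 2 / s ^ 2 * exp (s * v) := by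
  have := quadratic_le_exp_of_nonneg (mul_nonneg hs.le hv)
  rw [div_mul_eq_mul_div, le_div_iff₀ (by positivity)]
  nlinarith [mul_nonneg hs.le hv]

theorem mul_exp_mul_sq_le {u t : ℝ} (hu : 0 ≤ u) (ht : |t| ≤ u + 2 / 1000) :
    2000 * exp (-(500 * u)) * t ^ 2 ≤ 1 / 5 * exp (-(250 * u)) := by
  have hexp : exp (-(500 * u)) * exp (250 * u) = exp (-(250 * u)) := by
    rw [← exp_add]; ring_nf
  have hu2 := sq_le_two_div_sq_mul_exp (by norm_num : (0 : ℝ) < 250) hu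
  have h1 : 1 ≤ exp (250 * u) := one_le_exp (by positivity)
  have ht2 : t ^ 2 ≤ 1 / 10000 * exp (250 * u) := by
    have : t ^ 2 ≤ (u + 2 / 1000) ^ 2 := by
      rw [← sq_abs]; exact pow_le_pow_left₀ (abs_nonneg t) ht 2
    nlinarith [sq_nonneg (u - 2 / 1000)]
  calc 2000 * exp (-(500 * u)) * t ^ 2
      ≤ 2000 * exp (-(500 * u)) * (1 / 10000 * exp (250 * u)) := by gcongr
    _ = 1 / 5 * exp (-(250 * u)) := by rw [← hexp]; ring

theorem density_le_of_variance_eq_one {d : ℝ → ℝ} {μ : Measure ℝ} [IsProbabilityMeasure μ]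
    (hd : Measurable d) (hd0 : ∀ x, 0 ≤ d x)
    (hμ : μ = volume.withDensity fun x => ENNReal.ofReal (d x))
    (hconc : ConcaveOn ℝ {x | 0 < d x} fun x => log (d x)) (hvar : Var[id; μ] = 1) (z : ℝ) :
    d z ≤ 1000000 := by
  by_contra! hz
  have hh : (0 : ℝ) < 1 / 1000 := by norm_num
  obtain ⟨wp, ⟨hwp₁, hwp₂⟩, hwp⟩ := exists_density_lt_two_div hμ hh (z + 1 / 1000)
  obtain ⟨wm, ⟨hwm₁, hwm₂⟩, hwm⟩ := exists_density_lt_two_div hμ hh (z - 2 / 1000)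
  norm_num at hwp hwm
  have hdrop {t : ℝ} (ht : t ≤ 2 / 1000) : 2000 ≤ exp (-(500 * t)) * d z :=
    calc (2000 : ℝ) ≤ exp (-1) * 1000000 := by linarith [exp_neg_one_gt_d9]
      _ ≤ exp (-(500 * t)) * d z := by gcongr; linarith
  have hright (x : ℝ) (hx : wp < x) : d x * (x - z) ^ 2 ≤ 1 / 5 * exp (-(250 * (x - wp))) := by
    have hdx := le_mul_exp_of_concaveOn_log_right hd0 hconc (by linarith) (by linarith) hx.le
      (hwp.le.trans (hdrop (by linarith)))
    calc d x * (x - z) ^ 2 ≤ 2000 * exp (-(500 * (x - wp))) * (x - z) ^ 2 := by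
          gcongr; exact hdx.trans (by gcongr)
      _ ≤ _ := mul_exp_mul_sq_le (by linarith) (by rw [abs_of_nonneg (by linarith)]; linarith)
  have hleft (x : ℝ) (hx : x < wm) : d x * (x - z) ^ 2 ≤ 1 / 5 * exp (-(250 * (wm - x))) := by
    have hdx := le_mul_exp_of_concaveOn_log_left hd0 hconc (by linarith) (by linarith) hx.le
      (hwm.le.trans (hdrop (by linarith)))
    calc d x * (x - z) ^ 2 ≤ 2000 * exp (-(500 * (wm - x))) * (x - z) ^ 2 := by
          gcongr; exact hdx.trans (by gcongr)
      _ ≤ _ := mul_exp_mul_sq_le (by linarith) (by rw [abs_of_nonpos (by linarith)]; linarith)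
  obtain ⟨-, hint⟩ := integrable_and_integral_le_of_exp_tails hd hd0 hμ
    (F := fun x => (x - z) ^ 2) (by fun_prop) (fun x => sq_nonneg _) (C := (2 / 1000) ^ 2)
    (by linarith) (by norm_num : (0 : ℝ) < 250) (fun x hx => by nlinarith [hx.1, hx.2])
    hleft hright
  have : 1 ≤ ∫ x, (x - z) ^ 2 ∂μ :=
    hvar ▸ variance_le_integral_sub_sq aestronglyMeasurable_id z
  norm_num at hint
  linarith

theorem mul_exp_mul_exp_abs_le {u t : ℝ} (ht : |t| ≤ 21 + u) :
    1 / 200 * exp (-(1 / 25 * u)) * exp (|t| / 100)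
      ≤ exp (21 / 100) / 200 * exp (-(3 / 100 * u)) := by
  calc 1 / 200 * exp (-(1 / 25 * u)) * exp (|t| / 100)
      ≤ 1 / 200 * exp (-(1 / 25 * u)) * exp ((21 + u) / 100) := by gcongr
    _ = exp (21 / 100) / 200 * exp (-(3 / 100 * u)) := by
        have : exp (-(1 / 25 * u)) * exp ((21 + u) / 100)
            = exp (21 / 100) * exp (-(3 / 100 * u)) := by
          rw [← exp_add, ← exp_add]; ring_nf
        linear_combination (1 / 200) * this

theorem integrable_and_integral_exp_abs_sub_mean_le {d : ℝ → ℝ} {μ : Measure ℝ}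
    [IsProbabilityMeasure μ]
    (hd : Measurable d) (hd0 : ∀ x, 0 ≤ d x)
    (hμ : μ = volume.withDensity fun x => ENNReal.ofReal (d x))
    (hconc : ConcaveOn ℝ {x | 0 < d x} fun x => log (d x)) (hvar : Var[id; μ] = 1) :
    Integrable (fun x => exp (|x - ∫ y, y ∂μ| / 100)) μ ∧
      ∫ x, exp (|x - ∫ y, y ∂μ| / 100) ∂μ ≤ 2 := by
  set m := ∫ y, y ∂μ
  obtain ⟨a, ⟨ha₁, ha₂⟩, ha⟩ : ∃ a ∈ Icc (m - 2) (m + 2), 1 / 8 ≤ d a := by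
    by_contra! h
    have := (ofReal_one_sub_le_measure_Icc_mean hvar (by norm_num : (0 : ℝ) < 2)).trans
      (measure_Icc_le_of_density_le hμ (by norm_num) fun x hx => (h x hx).le)
    rw [ENNReal.ofReal_le_ofReal_iff (by linarith)] at this
    linarith
  have hfar (p : ℝ) (hp : ∀ x ∈ Icc p (p + 1), 20 ≤ |x - m|) :
      ∃ w ∈ Icc p (p + 1), d w < 1 / 200 := by
    refine exists_density_lt_of_measure_Icc_lt hμ (by linarith)
      (((measure_mono hp).trans (measure_le_abs_sub_mean_le hvar (by norm_num))).trans_lt ?_)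
    rw [ENNReal.ofReal_lt_ofReal_iff (by linarith)]
    norm_num
  obtain ⟨bp, ⟨hbp₁, hbp₂⟩, hbp⟩ := hfar (m + 20) fun x hx => by
    rw [abs_of_nonneg (by linarith [hx.1])]; linarith [hx.1]
  obtain ⟨bm, ⟨hbm₁, hbm₂⟩, hbm⟩ := hfar (m - 21) fun x hx => by
    rw [abs_of_nonpos (by linarith [hx.2])]; linarith [hx.2]
  have hdrop {t : ℝ} (ht : t ≤ 25) : 1 / 200 ≤ exp (-(1 / 25 * t)) * d a :=
    calc (1 / 200 : ℝ) ≤ exp (-1) * (1 / 8) := by linarith [exp_neg_one_gt_d9]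
      _ ≤ exp (-(1 / 25 * t)) * d a := by gcongr; linarith
  have hright (x : ℝ) (hx : bp < x) :
      d x * exp (|x - m| / 100) ≤ exp (21 / 100) / 200 * exp (-(3 / 100 * (x - bp))) := by
    have hdx := le_mul_exp_of_concaveOn_log_right hd0 hconc (by linarith) (by linarith) hx.le
      (hbp.le.trans (hdrop (by linarith)))
    calc d x * exp (|x - m| / 100)
        ≤ 1 / 200 * exp (-(1 / 25 * (x - bp))) * exp (|x - m| / 100) := by
          gcongr; exact hdx.trans (by gcongr)
      _ ≤ _ := mul_exp_mul_exp_abs_le (by rw [abs_of_nonneg (by linarith)]; linarith)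
  have hleft (x : ℝ) (hx : x < bm) :
      d x * exp (|x - m| / 100) ≤ exp (21 / 100) / 200 * exp (-(3 / 100 * (bm - x))) := by
    have hdx := le_mul_exp_of_concaveOn_log_left hd0 hconc (by linarith) (by linarith) hx.le
      (hbm.le.trans (hdrop (by linarith)))
    calc d x * exp (|x - m| / 100)
        ≤ 1 / 200 * exp (-(1 / 25 * (bm - x))) * exp (|x - m| / 100) := by
          gcongr; exact hdx.trans (by gcongr)
      _ ≤ _ := mul_exp_mul_exp_abs_le (by rw [abs_of_nonpos (by linarith)]; linarith)
  obtain ⟨hint, hle⟩ := integrable_and_integral_le_of_exp_tails hd hd0 hμ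
    (F := fun x => exp (|x - m| / 100)) (by fun_prop) (fun x => (exp_pos _).le)
    (C := exp (21 / 100)) (by linarith) (by norm_num : (0 : ℝ) < 3 / 100)
    (fun x hx => exp_le_exp.2 (by
      have : |x - m| ≤ 21 := abs_le.2 ⟨by linarith [hx.1], by linarith [hx.2]⟩
      linarith)) hleft hright
  refine ⟨hint, hle.trans ?_⟩
  have := exp_bound_div_one_sub_of_interval' (by norm_num : (0 : ℝ) < 21 / 100) (by norm_num)
  norm_num at this ⊢
  linarith

theorem abs_sub_sqrt_lt_or_abs_add_sqrt_lt {x c δ : ℝ} (hδ : 0 ≤ δ)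
    (h : |x ^ 2 - c| < δ ^ 2) :
    |x - √c| < δ ∨ |x + √c| < δ := by
  by_contra! hfar
  have hprod : |x ^ 2 - √c ^ 2| ≤ |x ^ 2 - c| := by
    rcases le_or_gt 0 c with hc | hc
    · rw [sq_sqrt hc]
    · rw [sqrt_eq_zero'.2 hc.le, zero_pow two_ne_zero, sub_zero, abs_of_nonneg (sq_nonneg x),
        abs_of_nonneg (by linarith [sq_nonneg x])]
      linarith
  have hfactor : |x - √c| * |x + √c| = |x ^ 2 - √c ^ 2| := by rw [← abs_mul]; ring_nf
  have : δ ^ 2 ≤ |x - √c| * |x + √c| := by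
    rw [sq]; exact mul_le_mul hfar.1 hfar.2 hδ (abs_nonneg _)
  linarith

theorem sq_le_integral_sq_sub_sq_of_density_le {d : ℝ → ℝ} {μ : Measure ℝ}
    [IsProbabilityMeasure μ] (hμ : μ = volume.withDensity fun x => ENNReal.ofReal (d x))
    {M : ℝ} (hM : 0 < M) (hdM : ∀ x, d x ≤ M) (c : ℝ)
    (hint : Integrable (fun x => (x ^ 2 - c) ^ 2) μ) :
    (1 / (2 * (8 * M) ^ 2)) ^ 2 ≤ ∫ x, (x ^ 2 - c) ^ 2 ∂μ := by
  set δ := 1 / (8 * M) with hδ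
  have hδ0 : 0 < δ := by positivity
  set S := {x : ℝ | δ ^ 4 ≤ (x ^ 2 - c) ^ 2}
  have hS : MeasurableSet S := measurableSet_le measurable_const (by fun_prop)
  have hnear : Sᶜ ⊆ Icc (√c - δ) (√c + δ) ∪ Icc (-√c - δ) (-√c + δ) := by
    intro x hx
    have : |x ^ 2 - c| < δ ^ 2 := by
      simp only [S, mem_compl_iff, mem_ofPred_eq, not_le] at hx
      exact abs_lt_of_sq_lt_sq (by rw [← pow_mul]; exact hx) (sq_nonneg δ)
    rcases abs_sub_sqrt_lt_or_abs_add_sqrt_lt hδ0.le this with h | h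
    · exact Or.inl ⟨by linarith [abs_lt.1 h], by linarith [abs_lt.1 h]⟩
    · exact Or.inr ⟨by linarith [abs_lt.1 h], by linarith [abs_lt.1 h]⟩
  have hSc : μ.real Sᶜ ≤ 1 / 2 := by
    have hI (p : ℝ) : μ (Icc (p - δ) (p + δ)) ≤ ENNReal.ofReal (1 / 4) := by
      convert measure_Icc_le_of_density_le hμ hM.le fun x _ => hdM x using 2
      rw [hδ]; field_simp; ring
    refine ENNReal.toReal_le_of_le_ofReal (by norm_num) ?_
    calc μ Sᶜ ≤ μ (Icc (√c - δ) (√c + δ)) + μ (Icc (-√c - δ) (-√c + δ)) :=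
          (measure_mono hnear).trans (measure_union_le _ _)
      _ ≤ ENNReal.ofReal (1 / 4) + ENNReal.ofReal (1 / 4) := add_le_add (hI _) (hI _)
      _ = ENNReal.ofReal (1 / 2) := by
          rw [← ENNReal.ofReal_add (by norm_num) (by norm_num)]; norm_num
  have hmarkov := mul_meas_ge_le_integral_of_nonneg (.of_forall fun x => sq_nonneg _) hint (δ ^ 4)
  rw [probReal_compl_eq_one_sub hS] at hSc
  have : (1 / (2 * (8 * M) ^ 2)) ^ 2 = δ ^ 4 / 4 := by rw [hδ]; field_simp; ring
  rw [this]
  nlinarith [pow_pos hδ0 4]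

theorem pow_four_le_mul_exp_abs_div (t : ℝ) : t ^ 4 ≤ 2400000000 * exp (|t| / 100) := by
  have := pow_div_factorial_le_exp (x := |t| / 100) (by positivity) 4
  rw [div_pow, (by decide : Even 4).pow_abs] at this
  norm_num [Nat.factorial] at this
  linarith

section Moments

variable {μ : Measure ℝ} [IsProbabilityMeasure μ] {m : ℝ}

theorem integrable_sq_sub_sq (hexp : Integrable (fun x => exp (|x - m| / 100)) μ) (c : ℝ) :
    Integrable (fun x => (x ^ 2 - c) ^ 2) μ := by
  refine ((hexp.const_mul (16 * 2400000000)).add (integrable_const (16 * m ^ 4 + 2 * c ^ 2))).mono'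
    (by fun_prop) (.of_forall fun x => ?_)
  have hx4 : x ^ 4 ≤ 8 * (x - m) ^ 4 + 8 * m ^ 4 := by
    nlinarith [sq_nonneg (x - 2 * m), sq_nonneg ((x - m) ^ 2 - m ^ 2), sq_nonneg (x * (x - 2 * m))]
  have := pow_four_le_mul_exp_abs_div (x - m)
  rw [Real.norm_of_nonneg (sq_nonneg _), Pi.add_apply]
  nlinarith [sq_nonneg (x ^ 2 + c)]

theorem integral_sq_sub_one_sq_le (hexp : Integrable (fun x => exp (|x - m| / 100)) μ)
    (hle : ∫ x, exp (|x - m| / 100) ∂μ ≤ 2) :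
    ∫ x, ((x - m) ^ 2 - 1) ^ 2 ∂μ ≤ 1000000 ^ 2 := by
  calc ∫ x, ((x - m) ^ 2 - 1) ^ 2 ∂μ
      ≤ ∫ x, (2400000000 * exp (|x - m| / 100) + 1) ∂μ := by
        refine integral_mono_of_nonneg (.of_forall fun x => sq_nonneg _)
          ((hexp.const_mul _).add (integrable_const 1)) (.of_forall fun x => ?_)
        have := pow_four_le_mul_exp_abs_div (x - m)
        nlinarith [sq_nonneg (x - m)]
    _ = 2400000000 * ∫ x, exp (|x - m| / 100) ∂μ + 1 := by
        rw [integral_add (hexp.const_mul _) (integrable_const 1), integral_const_mul]; simp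
    _ ≤ 1000000 ^ 2 := by linarith

end Moments

/-- one-dimensional constants for log-concave random variables with
unit variance: `Var(X²)^(1/2) ≥ c₀`, `Var((X-EX)²)^(1/2) ≤ c₁`, `‖X-EX‖_{ψ₁} ≤ c₂`. -/
theorem statement10 :
    ∃ c₀ c₁ c₂ : ℝ, 0 < c₀ ∧ 0 < c₁ ∧ 0 < c₂ ∧
      ∀ μ : Measure ℝ, IsProbabilityMeasure μ → IsLogConcave μ →
      (∫ x, (x - ∫ y, y ∂μ) ^ 2 ∂μ) = 1 →
      (c₀ ≤ Real.sqrt (∫ x, (x ^ 2 - ∫ y, y ^ 2 ∂μ) ^ 2 ∂μ) ∧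
       Real.sqrt (∫ x, ((x - ∫ y, y ∂μ) ^ 2 - ∫ y, (y - ∫ z, z ∂μ) ^ 2 ∂μ) ^ 2 ∂μ) ≤ c₁ ∧
       HasPsi1NormLE μ (fun x => x - ∫ y, y ∂μ) c₂) := by
  refine ⟨1 / (2 * (8 * 1000000) ^ 2), 1000000, 100, by norm_num, by norm_num, by norm_num, ?_⟩
  rintro μ hμ ⟨d, hd, hd0, hlc, hμd⟩ hvar
  have hV : Var[id; μ] = 1 := by rw [variance_eq_integral measurable_id.aemeasurable]; exact hvar
  have hconc := concaveOn_log_of_rpow_le hlc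
  obtain ⟨hint, hexp⟩ := integrable_and_integral_exp_abs_sub_mean_le hd hd0 hμd hconc hV
  refine ⟨?_, ?_, ⟨by norm_num, hexp⟩⟩
  · rw [Real.le_sqrt' (by positivity)]
    exact sq_le_integral_sq_sub_sq_of_density_le hμd (by norm_num)
      (density_le_of_variance_eq_one hd hd0 hμd hconc hV) _ (integrable_sq_sub_sq hint _)
  · rw [hvar, Real.sqrt_le_left (by norm_num)]
    exact integral_sq_sub_one_sq_le hint hexp
end
end

section
/- Let μ be a probability measure on ℝⁿ such that all exponential tilts τ_{h}μ are well defined (i.e. ∫ e^{h·x} dμ < ∞ for all h ∈ ℝⁿ). Fix t > 0 and h ∈ ℝⁿ. Then there exists h₀ ∈ ℝⁿ such that (1/Z_{t,h}) μ e^{−t|x|² + h·x} = (1/Z) (τ_{h₀}μ) e^{−t|x − bar(τ_{h₀}μ)|²}, where Z is a normalizing constant; equivalently, the map F : h₀ ↦ h₀ + 2t · bar(τ_{h₀}μ) is onto ℝⁿ. -/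
open MeasureTheory Real
open scoped ENNReal NNReal RealInnerProductSpace

noncomputable section

/-!
Let `Λ(k) = log ∫ e^{⟪k, x⟫} dμ`; its gradient is `bar(τ_k μ)`. Hence
`Φ(k) = 2t Λ(k) + |k|²/2 - ⟪h, k⟫` has gradient `k + 2t bar(τ_k μ) - h`. Jensen gives
`Λ(k) ≥ ⟪k, bar μ⟫`, so `Φ` is coercive, and at a minimiser `h₀` the gradient vanishes:
`h = h₀ + 2t bar(τ_{h₀} μ)`. The identity of measures is the completed square
`⟪h₀, x⟫ - t|x - b|² = -t|x|² + ⟪h₀ + 2tb, x⟫ - t|b|²`: tilting by `f` and then by `g` is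
tilting by `f + g`, and a tilt does not see additive constants.
-/

namespace MeasureTheory

variable {α : Type*} [MeasurableSpace α]

lemma tilted_add_const (μ : Measure α) (f : α → ℝ) (c : ℝ) :
    μ.tilted (fun x ↦ f x + c) = μ.tilted f := by
  simp only [Measure.tilted, exp_add, integral_mul_const]
  congr 1
  funext x
  rw [mul_div_mul_right _ _ (exp_pos c).ne']

lemma inv_integral_exp_smul_withDensity_eq_tilted {μ : Measure α} [NeZero μ] {f : α → ℝ}
    (hf : Integrable (fun x ↦ exp (f x)) μ) :
    (ENNReal.ofReal (∫ x, exp (f x) ∂μ))⁻¹ • μ.withDensity (fun x ↦ ENNReal.ofReal (exp (f x))) =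
      μ.tilted f := by
  have hZ := integral_exp_pos hf
  rw [Measure.tilted,
    ← withDensity_smul' _ _ (ENNReal.inv_ne_top.2 (ENNReal.ofReal_pos.2 hZ).ne')]
  congr 1
  funext x
  rw [Pi.smul_apply, smul_eq_mul, ENNReal.ofReal_div_of_pos hZ, ENNReal.div_eq_inv_mul]

end MeasureTheory

section ExponentialMoments

variable {E : Type*} [NormedAddCommGroup E] [InnerProductSpace ℝ E]

lemma OrthonormalBasis.norm_le_sum_abs_inner {ι : Type*} [Fintype ι]
    (b : OrthonormalBasis ι ℝ E) (x : E) : ‖x‖ ≤ ∑ i, |⟪b i, x⟫| := by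
  calc ‖x‖ = ‖∑ i, ⟪b i, x⟫ • b i‖ := by rw [b.sum_repr']
    _ ≤ ∑ i, ‖⟪b i, x⟫ • b i‖ := norm_sum_le _ _
    _ = ∑ i, |⟪b i, x⟫| := by simp [norm_smul]

lemma Real.exp_abs_le_sum_units (y : ℝ) : exp |y| ≤ ∑ s : ℤˣ, exp (s * y) := by
  have hsum : (∑ s : ℤˣ, exp (s * y)) = exp y + exp (-y) := by simp
  rw [hsum]
  rcases abs_cases y with ⟨hy, -⟩ | ⟨hy, -⟩ <;> rw [hy] <;> linarith [exp_pos y, exp_pos (-y)]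

lemma exp_mul_norm_le_sum_exp_inner {ι : Type*} [Fintype ι] [DecidableEq ι]
    (b : OrthonormalBasis ι ℝ E) {c : ℝ} (hc : 0 ≤ c) (x : E) :
    exp (c * ‖x‖) ≤ ∑ σ : ι → ℤˣ, exp ⟪∑ i, (σ i * c) • b i, x⟫ := by
  calc exp (c * ‖x‖) ≤ exp (∑ i, c * |⟪b i, x⟫|) := by
        rw [exp_le_exp, ← Finset.mul_sum]
        exact mul_le_mul_of_nonneg_left (b.norm_le_sum_abs_inner x) hc
    _ = ∏ i, exp (c * |⟪b i, x⟫|) := exp_sum _ _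
    _ ≤ ∏ i, ∑ s : ℤˣ, exp (s * (c * ⟪b i, x⟫)) := by
        refine Finset.prod_le_prod (fun i _ ↦ (exp_pos _).le) fun i _ ↦ ?_
        rw [← abs_of_nonneg hc, ← abs_mul, abs_of_nonneg hc]
        exact Real.exp_abs_le_sum_units _
    _ = ∑ σ : ι → ℤˣ, exp ⟪∑ i, (σ i * c) • b i, x⟫ := by
        rw [Fintype.prod_sum]
        simp [← exp_sum, sum_inner, real_inner_smul_left, mul_assoc]

variable [FiniteDimensional ℝ E] [MeasurableSpace E] [BorelSpace E] {μ : Measure E}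

lemma integrable_exp_mul_norm_add_inner (hμ : ∀ k : E, Integrable (fun x ↦ exp ⟪k, x⟫) μ)
    {c : ℝ} (hc : 0 ≤ c) (k : E) : Integrable (fun x ↦ exp (c * ‖x‖ + ⟪k, x⟫)) μ := by
  classical
  let b := stdOrthonormalBasis ℝ E
  refine (integrable_finsetSum Finset.univ
    fun (σ : Fin _ → ℤˣ) _ ↦ hμ (k + ∑ i, (σ i * c) • b i)).mono'
    (by fun_prop : Continuous _).aestronglyMeasurable (ae_of_all _ fun x ↦ ?_)
  rw [Real.norm_of_nonneg (exp_pos _).le]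
  calc exp (c * ‖x‖ + ⟪k, x⟫) = exp (c * ‖x‖) * exp ⟪k, x⟫ := exp_add _ _
    _ ≤ (∑ σ : _ → ℤˣ, exp ⟪∑ i, (σ i * c) • b i, x⟫) * exp ⟪k, x⟫ := by
        gcongr
        exact exp_mul_norm_le_sum_exp_inner b hc x
    _ = _ := by simp [Finset.sum_mul, ← exp_add, inner_add_left, add_comm]

lemma integrable_norm_mul_exp_mul_norm_add_inner
    (hμ : ∀ k : E, Integrable (fun x ↦ exp ⟪k, x⟫) μ) {c : ℝ} (hc : 0 ≤ c) (k : E) :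
    Integrable (fun x ↦ ‖x‖ * exp (c * ‖x‖ + ⟪k, x⟫)) μ := by
  refine (integrable_exp_mul_norm_add_inner hμ (by linarith : 0 ≤ c + 1) k).mono'
    (by fun_prop : Continuous _).aestronglyMeasurable (ae_of_all _ fun x ↦ ?_)
  rw [Real.norm_of_nonneg (by positivity)]
  calc ‖x‖ * exp (c * ‖x‖ + ⟪k, x⟫) ≤ exp ‖x‖ * exp (c * ‖x‖ + ⟪k, x⟫) := by
        gcongr
        linarith [add_one_le_exp ‖x‖]
    _ = exp ((c + 1) * ‖x‖ + ⟪k, x⟫) := by rw [← exp_add]; ring_nf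

lemma integrable_exp_inner_smul (hμ : ∀ k : E, Integrable (fun x ↦ exp ⟪k, x⟫) μ) (k : E) :
    Integrable (fun x ↦ exp ⟪k, x⟫ • x) μ := by
  refine (integrable_norm_mul_exp_mul_norm_add_inner hμ le_rfl k).mono'
    (by fun_prop : Continuous _).aestronglyMeasurable (ae_of_all _ fun x ↦ ?_)
  simp [norm_smul, mul_comm]

lemma hasFDerivAt_integral_exp_inner (hμ : ∀ k : E, Integrable (fun x ↦ exp ⟪k, x⟫) μ)
    (k : E) :
    HasFDerivAt (fun k ↦ ∫ x, exp ⟪k, x⟫ ∂μ) (innerSL ℝ (∫ x, exp ⟪k, x⟫ • x ∂μ)) k := by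
  have hderiv : ∀ x k' : E,
      HasFDerivAt (fun k ↦ exp ⟪k, x⟫) (innerSL ℝ (exp ⟪k', x⟫ • x)) k' := by
    intro x k'
    convert ((innerSL ℝ x).hasFDerivAt (x := k')).exp using 1
    · simp [real_inner_comm]
    · ext v; simp [real_inner_comm]
  have hbound : ∀ x, ∀ k' ∈ Metric.ball k 1,
      ‖innerSL ℝ (exp ⟪k', x⟫ • x)‖ ≤ ‖x‖ * exp (1 * ‖x‖ + ⟪k, x⟫) := by
    intro x k' hk'
    rw [innerSL_apply_norm, norm_smul, Real.norm_of_nonneg (exp_pos _).le, mul_comm]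
    gcongr
    have h1 : ⟪k' - k, x⟫ ≤ ‖k' - k‖ * ‖x‖ := real_inner_le_norm _ _
    have h2 : ‖k' - k‖ < 1 := by rwa [← dist_eq_norm]
    rw [inner_sub_left] at h1
    nlinarith [norm_nonneg x]
  have h := hasFDerivAt_integral_of_dominated_of_fderiv_le (Metric.ball_mem_nhds k one_pos)
    (.of_forall fun k' ↦ (by fun_prop : Continuous _).aestronglyMeasurable) (hμ k)
    (by fun_prop : Continuous fun x ↦ innerSL ℝ (exp ⟪k, x⟫ • x)).aestronglyMeasurable
    (ae_of_all _ hbound) (integrable_norm_mul_exp_mul_norm_add_inner hμ zero_le_one k)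
    (ae_of_all _ fun x k' _ ↦ hderiv x k')
  rwa [(innerSL ℝ).integral_comp_commSL (by simp) (integrable_exp_inner_smul hμ k)] at h

lemma inner_integral_le_log_integral_exp_inner [IsProbabilityMeasure μ]
    (hμ : ∀ k : E, Integrable (fun x ↦ exp ⟪k, x⟫) μ) (k : E) :
    ⟪k, ∫ x, x ∂μ⟫ ≤ log (∫ x, exp ⟪k, x⟫ ∂μ) := by
  have hid : Integrable (fun x : E ↦ x) μ := by simpa using integrable_exp_inner_smul hμ 0
  have hjensen : exp (∫ x, ⟪k, x⟫ ∂μ) ≤ ∫ x, exp ⟪k, x⟫ ∂μ :=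
    convexOn_exp.map_integral_le continuous_exp.continuousOn isClosed_univ
      (ae_of_all _ fun _ ↦ Set.mem_univ _) (hid.const_inner k) (hμ k)
  rw [integral_inner hid] at hjensen
  exact (le_log_iff_exp_le (integral_exp_pos (hμ k))).2 hjensen

end ExponentialMoments

section GaussianTilt

variable {n : ℕ} {μ : Measure (Euc n)}

lemma tilt_eq_tilted [NeZero μ] (hwd : TiltsWellDefined μ) (k : Euc n) :
    tilt μ k = μ.tilted (⟪k, ·⟫) :=
  inv_integral_exp_smul_withDensity_eq_tilted (hwd k)

lemma bary_tilt [NeZero μ] (hwd : TiltsWellDefined μ) (k : Euc n) :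
    bary (tilt μ k) = (∫ x, exp ⟪k, x⟫ ∂μ)⁻¹ • ∫ x, exp ⟪k, x⟫ • x ∂μ := by
  rw [bary, tilt_eq_tilted hwd, integral_tilted, ← integral_smul]
  simp_rw [smul_smul, div_eq_inv_mul]

lemma hasFDerivAt_log_integral_exp_inner [NeZero μ] (hwd : TiltsWellDefined μ) (k : Euc n) :
    HasFDerivAt (fun k ↦ log (∫ x, exp ⟪k, x⟫ ∂μ)) (innerSL ℝ (bary (tilt μ k))) k := by
  refine ((hasFDerivAt_integral_exp_inner hwd k).log
    (integral_exp_pos (hwd k)).ne').congr_fderiv ?_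
  rw [bary_tilt hwd, map_smulₛₗ, conj_trivial]

variable (μ) in
def tiltPotential (t : ℝ) (h k : Euc n) : ℝ :=
  2 * t * log (∫ x, exp ⟪k, x⟫ ∂μ) + 2⁻¹ * ‖k‖ ^ 2 - ⟪h, k⟫

lemma hasFDerivAt_tiltPotential [NeZero μ] (hwd : TiltsWellDefined μ) (t : ℝ) (h k : Euc n) :
    HasFDerivAt (tiltPotential μ t h)
      (innerSL ℝ (k + (2 * t) • bary (tilt μ k) - h)) k := by
  refine ((((hasFDerivAt_log_integral_exp_inner hwd k).const_mul (2 * t)).add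
    ((hasStrictFDerivAt_norm_sq k).hasFDerivAt.const_mul 2⁻¹)).sub
      (innerSL ℝ h).hasFDerivAt).congr_fderiv ?_
  rw [map_sub, map_add, map_smul]
  module

lemma tendsto_tiltPotential_cocompact [IsProbabilityMeasure μ] (hwd : TiltsWellDefined μ)
    {t : ℝ} (ht : 0 ≤ t) (h : Euc n) :
    Filter.Tendsto (tiltPotential μ t h) (Filter.cocompact _) Filter.atTop := by
  have hlower : ∀ k, ‖k‖ * (‖k‖ / 2 - (‖h‖ + 2 * t * ‖bary μ‖)) ≤ tiltPotential μ t h k := by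
    intro k
    have hjensen := inner_integral_le_log_integral_exp_inner hwd k
    have hb : -(‖k‖ * ‖bary μ‖) ≤ ⟪k, bary μ⟫ := neg_le_of_abs_le (abs_real_inner_le_norm _ _)
    have hh : ⟪h, k⟫ ≤ ‖h‖ * ‖k‖ := real_inner_le_norm _ _
    have := mul_le_mul_of_nonneg_left (hb.trans hjensen) (by positivity : 0 ≤ 2 * t)
    rw [tiltPotential]
    linarith
  refine Filter.tendsto_atTop_mono hlower ?_
  refine tendsto_norm_cocompact_atTop.atTop_mul_atTop₀ ?_
  exact Filter.tendsto_atTop_add_const_right _ _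
    (tendsto_norm_cocompact_atTop.atTop_div_const two_pos)

theorem exists_eq_add_smul_bary_tilt [IsProbabilityMeasure μ] (hwd : TiltsWellDefined μ)
    {t : ℝ} (ht : 0 ≤ t) (h : Euc n) : ∃ h₀ : Euc n, h = h₀ + (2 * t) • bary (tilt μ h₀) := by
  have hderiv := hasFDerivAt_tiltPotential hwd t h
  obtain ⟨h₀, hmin⟩ := Continuous.exists_forall_le
    (continuous_iff_continuousAt.2 fun k ↦ (hderiv k).continuousAt)
    (tendsto_tiltPotential_cocompact hwd ht h)
  have hcrit := IsLocalMin.hasFDerivAt_eq_zero (.of_forall hmin) (hderiv h₀)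
  refine ⟨h₀, (sub_eq_zero.1 ?_).symm⟩
  rw [← norm_eq_zero, ← innerSL_apply_norm ℝ, hcrit, norm_zero]

lemma gtilt_add_smul_eq [IsProbabilityMeasure μ] (hwd : TiltsWellDefined μ) {t : ℝ}
    (ht : 0 ≤ t) (h₀ b : Euc n) :
    gtilt μ t (h₀ + (2 * t) • b) =
      (ENNReal.ofReal (∫ x, exp (-t * ‖x - b‖ ^ 2) ∂(tilt μ h₀)))⁻¹ •
        (tilt μ h₀).withDensity (fun x ↦ ENNReal.ofReal (exp (-t * ‖x - b‖ ^ 2))) := by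
  have hgauss : Integrable (fun x ↦ exp (-t * ‖x‖ ^ 2 + ⟪h₀ + (2 * t) • b, x⟫)) μ := by
    refine (hwd (h₀ + (2 * t) • b)).mono' (by fun_prop : Continuous _).aestronglyMeasurable
      (ae_of_all _ fun x ↦ ?_)
    rw [Real.norm_of_nonneg (exp_pos _).le, exp_le_exp]
    nlinarith [sq_nonneg ‖x‖]
  have : IsProbabilityMeasure (μ.tilted (⟪h₀, ·⟫)) := isProbabilityMeasure_tilted (hwd h₀)
  have hbump : Integrable (fun x ↦ exp (-t * ‖x - b‖ ^ 2)) (μ.tilted (⟪h₀, ·⟫)) := by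
    refine (integrable_const 1).mono' (by fun_prop : Continuous _).aestronglyMeasurable
      (ae_of_all _ fun x ↦ ?_)
    rw [Real.norm_of_nonneg (exp_pos _).le, exp_le_one_iff]
    nlinarith [sq_nonneg ‖x - b‖]
  rw [gtilt, inv_integral_exp_smul_withDensity_eq_tilted hgauss, tilt_eq_tilted hwd,
    inv_integral_exp_smul_withDensity_eq_tilted hbump, tilted_tilted (hwd h₀),
    ← tilted_add_const _ _ (-t * ‖b‖ ^ 2)]
  congr 1
  funext x
  simp only [Pi.add_apply, norm_sub_sq_real, inner_add_left, real_inner_smul_left,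
    real_inner_comm b x]
  ring

end GaussianTilt

/-- every gaussian-tilted measure `μ_{t,h}` can be written as a
centered gaussian perturbation of an exponential tilt of `μ`; equivalently the map
`h₀ ↦ h₀ + 2t⬝bar(τ_{h₀}μ)` is onto. -/
theorem statement14 {n : ℕ} (μ : Measure (Euc n)) [IsProbabilityMeasure μ]
    (hwd : TiltsWellDefined μ) (t : ℝ) (ht : 0 < t) (h : Euc n) :
    ∃ h₀ : Euc n, h = h₀ + (2 * t) • bary (tilt μ h₀) ∧
      gtilt μ t h =
        (ENNReal.ofReal (∫ x, Real.exp (-t * ‖x - bary (tilt μ h₀)‖ ^ 2) ∂(tilt μ h₀)))⁻¹ •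
          (tilt μ h₀).withDensity
            (fun x => ENNReal.ofReal (Real.exp (-t * ‖x - bary (tilt μ h₀)‖ ^ 2))) := by
  obtain ⟨h₀, rfl⟩ := exists_eq_add_smul_bary_tilt hwd ht.le h
  exact ⟨h₀, rfl, gtilt_add_smul_eq hwd ht.le h₀ _⟩

end
end
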